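/- Let Γ be an exponent-canceling group of rank r with generators γ_1, …, γ_r (the images of the free generators of the presentation), and let A be an abelian topological group. Then the evaluation map Hom(Γ, A) → A^r sending a homomorphism f to (f(γ_1), …, f(γ_r)) is a homeomorphism, where Hom(Γ, A) carries the topology of pointwise convergence. -/

import Mathlib

/-!
A homomorphism `PresentedGroup R → A` is the same as a map of the generators killing `R`; since
every relator is a product of commutators and `A` is abelian, every map of the generators does.
The inverse of evaluation sends `v` to `x ↦ lift v w` for any word `w` representing `x`, and
`v ↦ lift v w` is continuous because it is built from coordinate projections by the continuous
group operations of `A`.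
-/

/-- The representation space `Hom(Γ, A)`: group homomorphisms `Γ → A`, topologized by
pointwise convergence (as a subspace of `Γ → A`). -/
abbrev HomSpace (Γ A : Type*) [Group Γ] [Group A] [TopologicalSpace A] : Type _ :=
  {f : Γ → A // ∀ a b, f (a * b) = f a * f b}

theorem FreeGroup.continuous_lift_apply {α G : Type*} [Group G] [TopologicalSpace G]
    [IsTopologicalGroup G] (w : FreeGroup α) :
    Continuous fun v : α → G => FreeGroup.lift v w := by
  induction w using FreeGroup.induction_on with
  | C1 => simp only [_root_.map_one, continuous_const]
  | of i => simp only [lift_apply_of, continuous_apply]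
  | inv_of _ ih => simp only [_root_.map_inv]; exact ih.inv
  | mul _ _ ihx ihy => simp only [_root_.map_mul]; exact ihx.mul ihy

theorem FreeGroup.lift_eq_one_of_mem_commutator {α A : Type*} [CommGroup A] (v : α → A)
    {w : FreeGroup α} (hw : w ∈ commutator (FreeGroup α)) : FreeGroup.lift v w = 1 :=
  Abelianization.commutator_subset_ker (FreeGroup.lift v) hw

namespace PresentedGroup

theorem continuous_toGroup_apply {α G : Type*} [Group G] [TopologicalSpace G]
    [IsTopologicalGroup G] {R : Set (FreeGroup α)}
    {h : ∀ v : α → G, ∀ w ∈ R, FreeGroup.lift v w = 1} (x : PresentedGroup R) :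
    Continuous fun v : α → G => toGroup (h v) x := by
  induction x using QuotientGroup.induction_on with
  | H w => exact FreeGroup.continuous_lift_apply w

def homSpaceHomeomorphOfSubsetCommutator {α : Type*} {R : Set (FreeGroup α)} (A : Type*)
    [CommGroup A] [TopologicalSpace A] [IsTopologicalGroup A]
    (hR : ∀ w ∈ R, w ∈ commutator (FreeGroup α)) :
    HomSpace (PresentedGroup R) A ≃ₜ (α → A) where
  toFun f k := f.1 (of k)
  invFun v := ⟨toGroup fun _ hw => FreeGroup.lift_eq_one_of_mem_commutator v (hR _ hw), map_mul _⟩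
  left_inv f := Subtype.ext <| funext fun _ =>
    (toGroup.unique _ (MonoidHom.mk' f.1 f.2) fun _ => rfl).symm
  right_inv _ := funext fun _ => toGroup.of _
  continuous_toFun := continuous_pi fun k => (continuous_apply (of k)).comp continuous_subtype_val
  continuous_invFun := (continuous_pi continuous_toGroup_apply).subtype_mk _

end PresentedGroup

/-- Let `Γ` be an exponent-canceling group of rank `r`, presented as
`F_r/⟨⟨R⟩⟩` with every relator in `R` lying in the commutator subgroup of the free group
`F_r`, with generators the images of the free generators.  For any abelian topological
group `A`, the evaluation map `Hom(Γ, A) → A^r`, `f ↦ (f(γ₁), …, f(γ_r))`, is a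
homeomorphism. -/
theorem stmt17 (r : ℕ) (R : Set (FreeGroup (Fin r)))
    (hR : ∀ w ∈ R, w ∈ commutator (FreeGroup (Fin r)))
    (A : Type) [CommGroup A] [TopologicalSpace A] [IsTopologicalGroup A] :
    IsHomeomorph
      (fun (f : HomSpace (PresentedGroup R) A) (k : Fin r) => f.1 (PresentedGroup.of k)) :=
  (PresentedGroup.homSpaceHomeomorphOfSubsetCommutator A hR).isHomeomorph
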